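/- A non-singular pair (θ*, t*) is a global solution of FPOR restricted to non-singular points (i.e., (θ*, t*) is FPOR-feasible and φ_r(r(θ*,t*)) ≥ φ_r(r(θ,t)) for every non-singular FPOR-feasible pair (θ, t)) if and only if there exists s* ∈ [0,1]^I such that (θ*, s*, t*) is a global solution of HNG restricted to non-singular points (i.e., (θ*, s*, t*) is HNG-feasible and φ_r(s*) ≥ φ_r(s) for every HNG-feasible triple (θ, s, t) with (θ, t) non-singular). -/

import Mathlib

open Finset

/-- The indicator `𝟙{a > t}` as a real number. -/
noncomputable def indi (a t : ℝ) : ℝ := if a > t then 1 else 0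

/-- `H_t(a,s) = s + [s+a−1−t]₊ − [s+a−t]₊`. -/
noncomputable def hng (t a s : ℝ) : ℝ := s + max (s + a - 1 - t) 0 - max (s + a - t) 0

/-- The predicted label vector `r(θ,t)_i = 𝟙{F θ i > t}`. -/
noncomputable def rvec {Θ I : Type*} (F : Θ → I → ℝ) (θ : Θ) (t : ℝ) (i : I) : ℝ :=
  indi (F θ i) t

/-- `(θ,t)` is non-singular if `F θ i ≠ t` for all `i`. -/
def NonSingular {Θ I : Type*} (F : Θ → I → ℝ) (θ : Θ) (t : ℝ) : Prop := ∀ i, F θ i ≠ t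

/-- The recallFn `φ_r(s) = (Σ_P s)/N₊`. -/
noncomputable def recallFn {I : Type*} (P : Finset I) (s : I → ℝ) : ℝ :=
  (∑ i ∈ P, s i) / (P.card : ℝ)

/-- `(θ,t)` is feasible for FPOR: `t ∈ [0,1]` and `Σ_P r(θ,t) ≥ α · Σ_I r(θ,t)`. -/
def FPORFeasible {Θ I : Type*} [Fintype I] (P : Finset I) (F : Θ → I → ℝ) (α : ℝ)
    (θ : Θ) (t : ℝ) : Prop :=
  t ∈ Set.Icc (0 : ℝ) 1 ∧ ∑ i ∈ P, rvec F θ t i ≥ α * ∑ i, rvec F θ t i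

/-- `(θ,s,t)` is feasible for the indicator-relaxed problem IND. -/
def INDFeasible {Θ I : Type*} [Fintype I] (P N : Finset I) (F : Θ → I → ℝ) (α : ℝ)
    (θ : Θ) (s : I → ℝ) (t : ℝ) : Prop :=
  (∀ i, s i ∈ Set.Icc (0 : ℝ) 1) ∧ t ∈ Set.Icc (0 : ℝ) 1 ∧
  (∑ i ∈ P, s i ≥ α * ∑ i, s i) ∧
  (∀ i ∈ P, s i ≤ indi (F θ i) t) ∧ (∀ i ∈ N, indi (F θ i) t ≤ s i)

/-- `(θ,s,t)` is feasible for the hinge-relaxed problem HNG. -/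
def HNGFeasible {Θ I : Type*} [Fintype I] (P N : Finset I) (F : Θ → I → ℝ) (α : ℝ)
    (θ : Θ) (s : I → ℝ) (t : ℝ) : Prop :=
  (∀ i, s i ∈ Set.Icc (0 : ℝ) 1) ∧ t ∈ Set.Icc (0 : ℝ) 1 ∧
  (∑ i ∈ P, s i ≥ α * ∑ i, s i) ∧
  (∀ i ∈ P, hng t (F θ i) (s i) ≤ 0) ∧ (∀ i ∈ N, 0 ≤ hng t (F θ i) (s i))

/-!
At a non-singular point `F θ i ≠ t` the hinge constraints are exact: for `s ∈ [0,1]`,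
`H_t(a,s) ≤ 0 ↔ s ≤ 𝟙{a>t}` and `0 ≤ H_t(a,s) ↔ 𝟙{a>t} ≤ s`, so HNG coincides there with
the indicator relaxation IND. The vector `r(θ,t)` is IND-feasible whenever `(θ,t)` is FPOR-feasible,
and conversely every IND-feasible `s` is dominated on `P` by `r(θ,t)`, which is then FPOR-feasible
(passing from `s` to `r(θ,t)` raises the positive entries and lowers the negative ones, which for
`α ∈ [0,1]` can only help the precision constraint).
Hence the two problems have the same optimal recall and `s* = r(θ*,t*)` is optimal for HNG.
-/

lemma indi_mem_Icc (a t : ℝ) : indi a t ∈ Set.Icc (0 : ℝ) 1 := by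
  unfold indi; split <;> norm_num

lemma hng_of_lt {t a s : ℝ} (hs : s ≤ 1) (h : a < t) : hng t a s = min s (t - a) := by
  unfold hng
  simp only [max_def, min_def]
  split_ifs <;> linarith

lemma hng_of_gt {t a s : ℝ} (hs : 0 ≤ s) (h : t < a) : hng t a s = max (s - 1) (t - a) := by
  unfold hng
  simp only [max_def]
  split_ifs <;> linarith

lemma hng_nonpos_iff {t a s : ℝ} (hs : s ∈ Set.Icc (0 : ℝ) 1) (h : a ≠ t) :
    hng t a s ≤ 0 ↔ s ≤ indi a t := by
  rcases h.lt_or_gt with hlt | hgt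
  · rw [hng_of_lt hs.2 hlt, indi, if_neg hlt.not_gt, min_le_iff]
    constructor
    · rintro (h | h) <;> linarith
    · exact Or.inl
  · rw [hng_of_gt hs.1 hgt, indi, if_pos hgt, max_le_iff]
    exact ⟨fun _ => hs.2, fun _ => ⟨by linarith, by linarith⟩⟩

lemma hng_nonneg_iff {t a s : ℝ} (hs : s ∈ Set.Icc (0 : ℝ) 1) (h : a ≠ t) :
    0 ≤ hng t a s ↔ indi a t ≤ s := by
  rcases h.lt_or_gt with hlt | hgt
  · rw [hng_of_lt hs.2 hlt, indi, if_neg hlt.not_gt, le_min_iff]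
    exact ⟨fun h => h.1, fun _ => ⟨hs.1, by linarith⟩⟩
  · rw [hng_of_gt hs.1 hgt, indi, if_pos hgt, le_max_iff]
    constructor
    · rintro (h | h) <;> linarith
    · exact fun h => Or.inl (by linarith)

lemma recallFn_le_recallFn {I : Type*} (P : Finset I) {s s' : I → ℝ}
    (h : ∑ i ∈ P, s i ≤ ∑ i ∈ P, s' i) : recallFn P s ≤ recallFn P s' :=
  div_le_div_of_nonneg_right h (Nat.cast_nonneg _)

section Feasibility

variable {Θ I : Type*} [Fintype I] {P N : Finset I} {F : Θ → I → ℝ} {α : ℝ} {θ : Θ}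
  {s : I → ℝ} {t : ℝ}

lemma indFeasible_iff_hngFeasible (hns : NonSingular F θ t) :
    INDFeasible P N F α θ s t ↔ HNGFeasible P N F α θ s t := by
  refine and_congr_right fun hs => and_congr_right fun _ => and_congr_right fun _ => ?_
  exact and_congr (forall₂_congr fun i _ => (hng_nonpos_iff (hs i) (hns i)).symm)
    (forall₂_congr fun i _ => (hng_nonneg_iff (hs i) (hns i)).symm)

lemma FPORFeasible.indFeasible_rvec (h : FPORFeasible P F α θ t) :
    INDFeasible P N F α θ (rvec F θ t) t :=
  ⟨fun _ => indi_mem_Icc _ _, h.1, h.2, fun _ _ => le_rfl, fun _ _ => le_rfl⟩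

lemma INDFeasible.sum_le_sum_rvec (h : INDFeasible P N F α θ s t) :
    ∑ i ∈ P, s i ≤ ∑ i ∈ P, rvec F θ t i :=
  sum_le_sum h.2.2.2.1

lemma INDFeasible.fporFeasible [DecidableEq I] (hPN : P ∪ N = univ) (hdisj : Disjoint P N)
    (hα : α ∈ Set.Icc (0 : ℝ) 1) (h : INDFeasible P N F α θ s t) :
    FPORFeasible P F α θ t := by
  have hpos : ∑ i ∈ P, s i ≤ ∑ i ∈ P, rvec F θ t i := h.sum_le_sum_rvec
  obtain ⟨-, ht, hprec, -, hN⟩ := h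
  have hneg : ∑ i ∈ N, rvec F θ t i ≤ ∑ i ∈ N, s i := sum_le_sum hN
  have hsplit (f : I → ℝ) : ∑ i, f i = ∑ i ∈ P, f i + ∑ i ∈ N, f i := by
    rw [← sum_union hdisj, hPN]
  refine ⟨ht, ?_⟩
  rw [hsplit] at hprec ⊢
  linarith [mul_le_mul_of_nonneg_left hneg hα.1,
    mul_le_mul_of_nonneg_left hpos (sub_nonneg.2 hα.2)]

end Feasibility

theorem stmt_12_general {Θ I : Type*} [Fintype I] [DecidableEq I] (P N : Finset I)
    (hPN : P ∪ N = Finset.univ) (hdisj : Disjoint P N)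
    (F : Θ → I → ℝ)
    (α : ℝ) (hα : α ∈ Set.Icc (0 : ℝ) 1)
    (θs : Θ) (ts : ℝ) (hns : NonSingular F θs ts) :
    (FPORFeasible P F α θs ts ∧
      ∀ θ t, NonSingular F θ t → FPORFeasible P F α θ t →
        recallFn P (rvec F θ t) ≤ recallFn P (rvec F θs ts))
    ↔
    (∃ ss : I → ℝ, HNGFeasible P N F α θs ss ts ∧
      ∀ θ (s : I → ℝ) t, NonSingular F θ t → HNGFeasible P N F α θ s t →
        recallFn P s ≤ recallFn P ss) := by
  constructor
  · rintro ⟨hfeas, hopt⟩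
    refine ⟨rvec F θs ts, (indFeasible_iff_hngFeasible hns).1 hfeas.indFeasible_rvec, ?_⟩
    intro θ s t hns' hhng
    have hind := (indFeasible_iff_hngFeasible hns').2 hhng
    exact (recallFn_le_recallFn P hind.sum_le_sum_rvec).trans
      (hopt θ t hns' (hind.fporFeasible hPN hdisj hα))
  · rintro ⟨ss, hfeas, hopt⟩
    have hind := (indFeasible_iff_hngFeasible hns).2 hfeas
    refine ⟨hind.fporFeasible hPN hdisj hα, fun θ t hns' hfpor => ?_⟩
    have hhng := (indFeasible_iff_hngFeasible hns').1 (hfpor.indFeasible_rvec (N := N))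
    exact (hopt θ _ t hns' hhng).trans (recallFn_le_recallFn P hind.sum_le_sum_rvec)

/-- A non-singular `(θ*, t*)` is a global solution of FPOR restricted to
non-singular points iff there exists `s*` such that `(θ*, s*, t*)` is a global
solution of HNG restricted to non-singular points. -/
theorem stmt_12 {Θ I : Type*} [Fintype I] [DecidableEq I] (P N : Finset I)
    (hPN : P ∪ N = Finset.univ) (hdisj : Disjoint P N) (hP : P.Nonempty)
    (F : Θ → I → ℝ) (hF : ∀ θ i, F θ i ∈ Set.Icc (0 : ℝ) 1)
    (α : ℝ) (hα : α ∈ Set.Icc (0 : ℝ) 1)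
    (θs : Θ) (ts : ℝ) (hns : NonSingular F θs ts) :
    (FPORFeasible P F α θs ts ∧
      ∀ θ t, NonSingular F θ t → FPORFeasible P F α θ t →
        recallFn P (rvec F θ t) ≤ recallFn P (rvec F θs ts))
    ↔
    (∃ ss : I → ℝ, HNGFeasible P N F α θs ss ts ∧
      ∀ θ (s : I → ℝ) t, NonSingular F θ t → HNGFeasible P N F α θ s t →
        recallFn P s ≤ recallFn P ss) :=
  stmt_12_general P N hPN hdisj F α hα θs ts hns
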